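/- Connectivity of 2×2 swap moves: any two I×J nonnegative integer tables with identical row sums and identical column sums can be transformed into one another by a finite sequence of basic moves, each adding 1 to cells (i₁,j₁),(i₂,j₂) and subtracting 1 from cells (i₁,j₂),(i₂,j₁) for some i₁≠i₂, j₁≠j₂, with every intermediate table remaining entrywise nonnegative. -/
import Mathlib


/-- A basic 2×2 swap move on nonnegative integer tables: add 1 to cells
`(i₁,j₁)` and `(i₂,j₂)` and subtract 1 from cells `(i₁,j₂)` and `(i₂,j₁)`
(the cells being subtracted from must be positive, so every intermediate
table stays entrywise nonnegative). -/
def BasicMove {I J : ℕ} (T T' : Fin I × Fin J → ℕ) : Prop :=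
  ∃ (i₁ i₂ : Fin I) (j₁ j₂ : Fin J), i₁ ≠ i₂ ∧ j₁ ≠ j₂ ∧
    0 < T (i₁, j₂) ∧ 0 < T (i₂, j₁) ∧
    T' (i₁, j₁) = T (i₁, j₁) + 1 ∧ T' (i₂, j₂) = T (i₂, j₂) + 1 ∧
    T' (i₁, j₂) = T (i₁, j₂) - 1 ∧ T' (i₂, j₁) = T (i₂, j₁) - 1 ∧
    ∀ p, p ≠ (i₁, j₁) → p ≠ (i₂, j₂) → p ≠ (i₁, j₂) → p ≠ (i₂, j₁) → T' p = T p

private lemma exists_lt_aux {n : ℕ} (f g : Fin n → ℕ)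
    (hsum : ∑ x, f x = ∑ x, g x) (a : Fin n) (h : g a < f a) :
    ∃ b, f b < g b := by
  by_contra hc
  push_neg at hc
  have := Finset.sum_lt_sum (f := g) (g := f) (fun b _ => hc b)
    ⟨a, Finset.mem_univ a, h⟩
  omega

private lemma sum_shift_aux {n : ℕ} (f g : Fin n → ℕ) (a b : Fin n) (hab : a ≠ b)
    (ha : g a = f a + 1) (hb : g b = f b - 1) (hfb : 0 < f b)
    (h : ∀ x, x ≠ a → x ≠ b → g x = f x) : ∑ x, g x = ∑ x, f x := by
  classical
  rw [← Finset.sum_sdiff (Finset.subset_univ ({a, b} : Finset (Fin n))) (f := g),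
      ← Finset.sum_sdiff (Finset.subset_univ ({a, b} : Finset (Fin n))) (f := f)]
  have h1 : ∑ x ∈ Finset.univ \ {a, b}, g x = ∑ x ∈ Finset.univ \ {a, b}, f x := by
    refine Finset.sum_congr rfl fun x hx => ?_
    simp only [Finset.mem_sdiff, Finset.mem_insert, Finset.mem_singleton] at hx
    exact h x (fun e => hx.2 (Or.inl e)) (fun e => hx.2 (Or.inr e))
  have h2 : ∑ x ∈ ({a, b} : Finset (Fin n)), g x = ∑ x ∈ ({a, b} : Finset (Fin n)), f x := by
    rw [Finset.sum_pair hab, Finset.sum_pair hab]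
    omega
  omega

theorem stmt_15 (I J : ℕ) (T T' : Fin I × Fin J → ℕ)
    (hrow : ∀ i, ∑ j, T (i, j) = ∑ j, T' (i, j))
    (hcol : ∀ j, ∑ i, T (i, j) = ∑ i, T' (i, j)) :
    Relation.ReflTransGen BasicMove T T' := by
  classical
  have key : ∀ d (T : Fin I × Fin J → ℕ),
      (∀ i, ∑ j, T (i, j) = ∑ j, T' (i, j)) →
      (∀ j, ∑ i, T (i, j) = ∑ i, T' (i, j)) →
      (∑ p : Fin I × Fin J, ((T p - T' p) + (T' p - T p))) ≤ d →
      Relation.ReflTransGen BasicMove T T' := by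
    intro d
    induction d with
    | zero =>
      intro T hrow hcol hd
      have hz : ∀ p ∈ (Finset.univ : Finset (Fin I × Fin J)),
          ((T p - T' p) + (T' p - T p)) = 0 := by
        rw [← Finset.sum_eq_zero_iff]
        omega
      have : T = T' := by
        funext p
        have := hz p (Finset.mem_univ p)
        omega
      rw [this]
    | succ d ih =>
      intro T hrow hcol hd
      by_cases hTT : T = T'
      · rw [hTT]
      · -- find a cell where T < T'
        have hne : ∃ p, T p ≠ T' p := by
          by_contra hc; push_neg at hc; exact hTT (funext hc)
        obtain ⟨p, hp⟩ := hne
        obtain ⟨i₁, j₁, hj1⟩ : ∃ i₁ j₁, T (i₁, j₁) < T' (i₁, j₁) := by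
          rcases lt_or_gt_of_ne hp with h | h
          · exact ⟨p.1, p.2, h⟩
          · obtain ⟨b, hb⟩ := exists_lt_aux (fun j => T (p.1, j)) (fun j => T' (p.1, j))
              (hrow p.1) p.2 h
            exact ⟨p.1, b, hb⟩
        -- find j₂ in the same row with T > T'
        obtain ⟨j₂, hj2⟩ := exists_lt_aux (fun j => T' (i₁, j)) (fun j => T (i₁, j))
          (hrow i₁).symm j₁ hj1
        -- find i₂ in column j₁ with T > T'
        obtain ⟨i₂, hi2⟩ := exists_lt_aux (fun i => T' (i, j₁)) (fun i => T (i, j₁))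
          (hcol j₁).symm i₁ hj1
        replace hj2 : T' (i₁, j₂) < T (i₁, j₂) := hj2
        replace hi2 : T' (i₂, j₁) < T (i₂, j₁) := hi2
        have hii : i₁ ≠ i₂ := by rintro rfl; omega
        have hjj : j₁ ≠ j₂ := by rintro rfl; omega
        set T₂ : Fin I × Fin J → ℕ := fun q =>
          if q = (i₁, j₁) then T q + 1 else if q = (i₂, j₂) then T q + 1
          else if q = (i₁, j₂) then T q - 1 else if q = (i₂, j₁) then T q - 1
          else T q with hT₂
        have ne12 : ((i₁, j₁) : Fin I × Fin J) ≠ (i₂, j₂) := by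
          simp [Prod.ext_iff]; intro h; exact absurd h hii
        have v11 : T₂ (i₁, j₁) = T (i₁, j₁) + 1 := by simp [hT₂]
        have v22 : T₂ (i₂, j₂) = T (i₂, j₂) + 1 := by
          simp [hT₂, Prod.ext_iff, Ne.symm hii]
        have v12 : T₂ (i₁, j₂) = T (i₁, j₂) - 1 := by
          simp [hT₂, Prod.ext_iff, Ne.symm hjj, hii]
        have v21 : T₂ (i₂, j₁) = T (i₂, j₁) - 1 := by
          simp [hT₂, Prod.ext_iff, Ne.symm hii, hjj]
        have voff : ∀ q, q ≠ (i₁, j₁) → q ≠ (i₂, j₂) → q ≠ (i₁, j₂) → q ≠ (i₂, j₁) →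
            T₂ q = T q := by
          intro q h1 h2 h3 h4
          simp [hT₂, h1, h2, h3, h4]
        have hmove : BasicMove T T₂ :=
          ⟨i₁, i₂, j₁, j₂, hii, hjj, by omega, by omega,
            v11, v22, v12, v21, voff⟩
        -- row sums preserved
        have hrow2 : ∀ i, ∑ j, T₂ (i, j) = ∑ j, T' (i, j) := by
          intro i
          rw [← hrow i]
          by_cases h1 : i = i₁
          · rw [h1]
            exact sum_shift_aux (fun j => T (i₁, j)) (fun j => T₂ (i₁, j)) j₁ j₂ hjj
              v11 v12 (by show 0 < T (i₁, j₂); omega) (fun x hx1 hx2 => voff (i₁, x)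
                (by simp [Prod.ext_iff, hx1]) (by simp [Prod.ext_iff, hii])
                (by simp [Prod.ext_iff, hx2]) (by simp [Prod.ext_iff, hii]))
          · by_cases h2 : i = i₂
            · rw [h2]
              exact sum_shift_aux (fun j => T (i₂, j)) (fun j => T₂ (i₂, j)) j₂ j₁
                (Ne.symm hjj) v22 v21 (by show 0 < T (i₂, j₁); omega) (fun x hx1 hx2 => voff (i₂, x)
                  (by simp [Prod.ext_iff]; intro h; exact absurd h (Ne.symm hii))
                  (by simp [Prod.ext_iff, hx1])
                  (by simp [Prod.ext_iff]; intro h; exact absurd h (Ne.symm hii))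
                  (by simp [Prod.ext_iff, hx2]))
            · refine Finset.sum_congr rfl fun x _ => voff (i, x) ?_ ?_ ?_ ?_ <;>
                simp [Prod.ext_iff, h1, h2]
        -- column sums preserved
        have hcol2 : ∀ j, ∑ i, T₂ (i, j) = ∑ i, T' (i, j) := by
          intro j
          rw [← hcol j]
          by_cases h1 : j = j₁
          · rw [h1]
            exact sum_shift_aux (fun i => T (i, j₁)) (fun i => T₂ (i, j₁)) i₁ i₂ hii
              v11 v21 (by show 0 < T (i₂, j₁); omega) (fun x hx1 hx2 => voff (x, j₁)
                (by simp [Prod.ext_iff, hx1]) (by simp [Prod.ext_iff, hjj])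
                (by simp [Prod.ext_iff, hjj]) (by simp [Prod.ext_iff, hx2]))
          · by_cases h2 : j = j₂
            · rw [h2]
              exact sum_shift_aux (fun i => T (i, j₂)) (fun i => T₂ (i, j₂)) i₂ i₁
                (Ne.symm hii) v22 v12 (by show 0 < T (i₁, j₂); omega) (fun x hx1 hx2 => voff (x, j₂)
                  (by simp [Prod.ext_iff]; intro _ h; exact absurd h (Ne.symm hjj))
                  (by simp [Prod.ext_iff, hx1])
                  (by simp [Prod.ext_iff, hx2])
                  (by simp [Prod.ext_iff]; intro _ h; exact absurd h (Ne.symm hjj)))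
            · refine Finset.sum_congr rfl fun x _ => voff (x, j) ?_ ?_ ?_ ?_ <;>
                simp [Prod.ext_iff, h1, h2]
        -- distance decreases
        have hdist : (∑ q : Fin I × Fin J, ((T₂ q - T' q) + (T' q - T₂ q))) ≤ d := by
          set S : Finset (Fin I × Fin J) := {(i₁, j₁), (i₂, j₂), (i₁, j₂), (i₂, j₁)}
            with hS
          have hsplit : ∀ U : Fin I × Fin J → ℕ,
              (∑ q ∈ S, ((U q - T' q) + (T' q - U q))) +
              (∑ q ∈ Sᶜ, ((U q - T' q) + (T' q - U q))) =
              ∑ q : Fin I × Fin J, ((U q - T' q) + (T' q - U q)) :=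
            fun U => Finset.sum_add_sum_compl S _
          have hcompl : ∑ q ∈ Sᶜ, ((T₂ q - T' q) + (T' q - T₂ q)) =
              ∑ q ∈ Sᶜ, ((T q - T' q) + (T' q - T q)) := by
            refine Finset.sum_congr rfl fun q hq => ?_
            simp only [hS, Finset.mem_compl, Finset.mem_insert, Finset.mem_singleton] at hq
            push_neg at hq
            rw [voff q hq.1 hq.2.1 hq.2.2.1 hq.2.2.2]
          have hdistinct : ((i₁, j₁) : Fin I × Fin J) ≠ (i₂, j₂) ∧
              ((i₁, j₁) : Fin I × Fin J) ≠ (i₁, j₂) ∧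
              ((i₁, j₁) : Fin I × Fin J) ≠ (i₂, j₁) ∧
              ((i₂, j₂) : Fin I × Fin J) ≠ (i₁, j₂) ∧
              ((i₂, j₂) : Fin I × Fin J) ≠ (i₂, j₁) ∧
              ((i₁, j₂) : Fin I × Fin J) ≠ (i₂, j₁) := by
            refine ⟨?_, ?_, ?_, ?_, ?_, ?_⟩ <;> simp [Prod.ext_iff] <;>
              first
              | (intro h; exact absurd h hii)
              | (intro h; exact absurd h hjj)
              | exact fun h => absurd h hii
              | exact fun h => absurd h hjj
              | exact fun h => absurd h (Ne.symm hii)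
              | exact fun h => absurd h (Ne.symm hjj)
          obtain ⟨d1, d2, d3, d4, d5, d6⟩ := hdistinct
          have hsumS : ∀ U : Fin I × Fin J → ℕ,
              ∑ q ∈ S, ((U q - T' q) + (T' q - U q)) =
              ((U (i₁, j₁) - T' (i₁, j₁)) + (T' (i₁, j₁) - U (i₁, j₁))) +
              ((U (i₂, j₂) - T' (i₂, j₂)) + (T' (i₂, j₂) - U (i₂, j₂))) +
              ((U (i₁, j₂) - T' (i₁, j₂)) + (T' (i₁, j₂) - U (i₁, j₂))) +
              ((U (i₂, j₁) - T' (i₂, j₁)) + (T' (i₂, j₁) - U (i₂, j₁))) := by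
            intro U
            rw [hS]
            rw [Finset.sum_insert (by simp [d1, d2, d3]),
                Finset.sum_insert (by simp [d4, d5]),
                Finset.sum_insert (by simp [d6]),
                Finset.sum_singleton]
            ring
          have h1 := hsplit T₂
          have h2 := hsplit T
          have e1 := hsumS T₂
          have e2 := hsumS T
          rw [v11, v22, v12, v21] at e1
          omega
        exact Relation.ReflTransGen.head hmove (ih T₂ hrow2 hcol2 hdist)
  exact key _ T hrow hcol le_rfl
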